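/- Let s, m ∈ ℤ, c ∈ ℝ, λ ∈ ℂ, and let S : (−1,1) → ℂ be twice differentiable with (L^{[s]}_{m,c} S)(x) = λ·S(x) for all x ∈ (−1,1). Then the reflected function S̃(x) := S(−x) satisfies (L^{[−s]}_{m,c} S̃)(x) = (λ − 2s)·S̃(x) for all x ∈ (−1,1). In particular the eigenvalues of the spin s and spin −s operators are related by λ^{[s]} − s = λ^{[−s]} + s. -/

import Mathlib

open Set

/-- The spin-weighted spheroidal operator `L^[s]_{m,c}` (with `x = cos θ`, `c = aω`). -/
noncomputable def spheroidalOp (s m : ℤ) (c : ℝ) (S : ℝ → ℂ) : ℝ → ℂ := fun x =>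
  deriv (fun y : ℝ => (1 - (y : ℂ) ^ 2) * deriv S y) x
    - (((m : ℂ) + (s : ℂ) * (x : ℂ)) ^ 2 / (1 - (x : ℂ) ^ 2)) * S x
    + ((s : ℂ) + (c : ℂ) ^ 2 * (x : ℂ) ^ 2 - 2 * (s : ℂ) * (c : ℂ) * (x : ℂ)) * S x

/-- If `S` is a twice differentiable eigenfunction of `L^[s]_{m,c}` with
eigenvalue `λ` on `(-1,1)`, then `x ↦ S(-x)` is an eigenfunction of `L^[-s]_{m,c}` with
eigenvalue `λ - 2s`; in particular `λ^[s] - s = λ^[-s] + s`. -/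
theorem stmt_15 (s m : ℤ) (c : ℝ) (lam : ℂ) (S : ℝ → ℂ)
    (hS : ∀ x ∈ Ioo (-1 : ℝ) 1, DifferentiableAt ℝ S x)
    (hS' : ∀ x ∈ Ioo (-1 : ℝ) 1, DifferentiableAt ℝ (deriv S) x)
    (heig : ∀ x ∈ Ioo (-1 : ℝ) 1, spheroidalOp s m c S x = lam * S x) :
    ∀ x ∈ Ioo (-1 : ℝ) 1,
      spheroidalOp (-s) m c (fun y => S (-y)) x = (lam - 2 * (s : ℂ)) * S (-x) := by
  intro x hx
  have hx' : -x ∈ Ioo (-1 : ℝ) 1 := ⟨by linarith [hx.2], by linarith [hx.1]⟩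
  have hcoord : ∀ y : ℝ, HasDerivAt (fun z : ℝ => (z : ℂ)) 1 y := fun y => by
    simpa using (hasDerivAt_id y).ofReal_comp
  have hsq : ∀ y : ℝ, HasDerivAt (fun z : ℝ => 1 - (z : ℂ) ^ 2) (-(2 * (y : ℂ))) y := fun y => by
    have := ((hcoord y).mul (hcoord y)).const_sub 1
    simp only [one_mul, mul_one, Pi.mul_apply, ← sq] at this
    exact this.congr_deriv (by ring)
  -- derivative of second derivative term for S at -x
  have hD1 : HasDerivAt (fun y : ℝ => (1 - (y : ℂ) ^ 2) * deriv S y)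
      (-(2 * ((-x : ℝ) : ℂ)) * deriv S (-x) + (1 - ((-x : ℝ) : ℂ) ^ 2) * deriv (deriv S) (-x)) (-x) :=
    (hsq (-x)).mul (hS' (-x) hx').hasDerivAt
  -- the reflected function's inner term
  have hTd : (fun y : ℝ => deriv (fun z => S (-z)) y) = fun y => -deriv S (-y) := by
    funext y; exact deriv_comp_neg (f := S) (x := y)
  have hSneg : HasDerivAt (fun y : ℝ => deriv S (-y)) (-deriv (deriv S) (-x)) x := by
    simpa [Function.comp_def] using (hS' (-x) hx').hasDerivAt.scomp x (hasDerivAt_neg x)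
  have hD2 : HasDerivAt (fun y : ℝ => (1 - (y : ℂ) ^ 2) * -deriv S (-y))
      (-(2 * (x : ℂ)) * -deriv S (-x) + (1 - (x : ℂ) ^ 2) * - -deriv (deriv S) (-x)) x :=
    (hsq x).mul hSneg.neg
  have key : deriv (fun y : ℝ => (1 - (y : ℂ) ^ 2) * deriv (fun z => S (-z)) y) x
      = deriv (fun y : ℝ => (1 - (y : ℂ) ^ 2) * deriv S y) (-x) := by
    rw [hD1.deriv]
    have : (fun y : ℝ => (1 - (y : ℂ) ^ 2) * deriv (fun z => S (-z)) y)
        = fun y : ℝ => (1 - (y : ℂ) ^ 2) * -deriv S (-y) := by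
      funext y; rw [deriv_comp_neg]
    rw [this, hD2.deriv]
    push_cast
    ring
  have h := heig (-x) hx'
  simp only [spheroidalOp] at h ⊢
  rw [key]
  push_cast at h ⊢
  linear_combination h
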